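/- Lifting and joining are compatible: for any two raw values v₁, v₂ related by the value-synchronization relation ≈ restricted to constant-only structure (i.e., they are structurally equal on constants and correspond pairwise on locations), the join lift_C(v₁) ⊔ lift_P(v₂) is defined. -/

import Mathlib

/-- The two sides: compute (C) and prove (P). -/
inductive Side : Type
  | C : Side
  | P : Side

/-- Raw values: constants, raw locations, class objects, proof objects. -/
inductive RawVal : Type
  | const : Nat → RawVal
  | loc : Nat → RawVal
  | new : String → List RawVal → RawVal
  | proofOf : String → List RawVal → RawVal

/-- Tagged values: constants, side-tagged references, paired references,
class objects, proof objects. -/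
inductive TagVal : Type
  | const : Nat → TagVal
  | refC : Nat → TagVal
  | refP : Nat → TagVal
  | refCP : Nat → Nat → TagVal
  | new : String → List TagVal → TagVal
  | proofOf : String → List TagVal → TagVal

mutual
/-- Lifting wraps raw locations into side-tagged references. -/
def liftVal : Side → RawVal → TagVal
  | _, .const n => .const n
  | .C, .loc i => .refC i
  | .P, .loc i => .refP i
  | ℓ, .new c a => .new c (liftList ℓ a)
  | ℓ, .proofOf p a => .proofOf p (liftList ℓ a)

def liftList : Side → List RawVal → List TagVal
  | _, [] => []
  | ℓ, v :: vs => liftVal ℓ v :: liftList ℓ vs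
end

mutual
/-- The partial join on tagged values: equal values join to themselves, a
compute reference joins with a prove reference into a paired reference, and
class / proof objects join componentwise; undefined otherwise. -/
def joinVal : TagVal → TagVal → Option TagVal
  | .const n, .const m => if n = m then some (.const n) else none
  | .refC i, .refC j => if i = j then some (.refC i) else none
  | .refP i, .refP j => if i = j then some (.refP i) else none
  | .refC i, .refP j => some (.refCP i j)
  | .refCP i j, .refCP i' j' =>
      if i = i' ∧ j = j' then some (.refCP i j) else none
  | .new c a, .new c' a' =>
      if c = c' then (joinList a a').map (TagVal.new c) else none
  | .proofOf p a, .proofOf p' a' =>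
      if p = p' then (joinList a a').map (TagVal.proofOf p) else none
  | _, _ => none

def joinList : List TagVal → List TagVal → Option (List TagVal)
  | [], [] => some []
  | x :: xs, y :: ys =>
      match joinVal x y, joinList xs ys with
      | some z, some zs => some (z :: zs)
      | _, _ => none
  | _, _ => none
end

mutual
/-- The value-synchronization relation: structurally equal on constants,
any pair of locations corresponds, and class / proof objects correspond
pairwise. -/
inductive Sync : RawVal → RawVal → Prop
  | const (n : Nat) : Sync (.const n) (.const n)
  | loc (i j : Nat) : Sync (.loc i) (.loc j)
  | new (c : String) {a b : List RawVal} :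
      SyncList a b → Sync (.new c a) (.new c b)
  | proofOf (p : String) {a b : List RawVal} :
      SyncList a b → Sync (.proofOf p a) (.proofOf p b)

inductive SyncList : List RawVal → List RawVal → Prop
  | nil : SyncList [] []
  | cons {v w : RawVal} {vs ws : List RawVal} :
      Sync v w → SyncList vs ws → SyncList (v :: vs) (w :: ws)
end

theorem joinList_cons_isSome (x y : TagVal) (xs ys : List TagVal) :
    (joinList (x :: xs) (y :: ys)).isSome ↔
      (joinVal x y).isSome ∧ (joinList xs ys).isSome := by
  simp only [joinList]
  cases joinVal x y <;> cases joinList xs ys <;> simp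

theorem joinVal_new_isSome (c : String) (a b : List TagVal) :
    (joinVal (.new c a) (.new c b)).isSome ↔ (joinList a b).isSome := by
  simp [joinVal]

theorem joinVal_proofOf_isSome (p : String) (a b : List TagVal) :
    (joinVal (.proofOf p a) (.proofOf p b)).isSome ↔ (joinList a b).isSome := by
  simp [joinVal]

/-- If two raw values are synchronized, then the join of their compute-side
and prove-side liftings is defined. -/
theorem sync_join_defined {v₁ v₂ : RawVal} (h : Sync v₁ v₂) :
    (joinVal (liftVal .C v₁) (liftVal .P v₂)).isSome := by
  induction h using Sync.rec
    (motive_2 := fun a b _ => (joinList (liftList .C a) (liftList .P b)).isSome) with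
  | const n => simp [liftVal, joinVal]
  | loc i j => rfl
  | new c _ ih => simpa only [liftVal, joinVal_new_isSome] using ih
  | proofOf p _ ih => simpa only [liftVal, joinVal_proofOf_isSome] using ih
  | nil => rfl
  | cons _ _ ih ih' => simpa only [liftList, joinList_cons_isSome] using ⟨ih, ih'⟩
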